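/- Let x ∈ Y be such that all x_i, i ≥ 1, are finite, let M ∈ ℕ, and define y ∈ Y as follows: y₀ = (x₀ + 1 − Σ_{i=1}^∞ 2^{−(i+M)}·δ_i) mod 1, y_i = x_i for 0 < i < M and y_i = ∞ for i ≥ M, where δ_i = 0 if x_{i+M} = x_M and δ_i = (Σ_{j=0}^{x_{i+M}−x_M−1} 1/(x_M+j)) mod 1 otherwise. Then (x, y) is a scrambled pair with modulus 1/2 for F, i.e., liminf_{n→∞} D(Fⁿ(x), Fⁿ(y)) = 0 and limsup_{n→∞} D(Fⁿ(x), Fⁿ(y)) ≥ 1/2. -/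

import Mathlib

open Filter

noncomputable section

instance : Fact ((0:ℝ) < 1) := ⟨one_pos⟩

/-- The unit circle `𝕊 = ℝ/ℤ` (with the metric `d₀(x,y) = min{|x−y|, 1−|x−y|}`). -/
abbrev Circle1 := AddCircle (1 : ℝ)

/-- Points of the product space `Π_{i=0}^∞ X_i = 𝕊 × Π_{i≥1} (ℕ ∪ {∞})`:
the first component is the circle coordinate `x₀`, and the second component gives
the coordinates `x_i ∈ ℕ ∪ {∞}` for `i ≥ 1`. -/
abbrev Pt := Circle1 × (ℕ+ → ℕ∞)

/-- `1/x` for `x ∈ ℕ ∪ {∞}`, with the convention `1/∞ = 0`. -/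
noncomputable def einv (x : ℕ∞) : ℝ := ((x.toNat : ℕ) : ℝ)⁻¹

/-- The metric `d_i(x,y) = |1/x − 1/y|` on `ℕ ∪ {∞}` (for `i ≥ 1`). -/
noncomputable def dE (x y : ℕ∞) : ℝ := |einv x - einv y|

/-- The metric `D(x,y) = Σ_{i=0}^∞ d_i(x_i,y_i)/2^i` on the product space. -/
noncomputable def D (x y : Pt) : ℝ :=
  dist x.1 y.1 + ∑' i : ℕ+, dE (x.2 i) (y.2 i) / 2 ^ (i : ℕ)

/-- `Y`: the set of points whose sequence of coordinates `(x_i)_{i≥1}` is a nondecreasing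
sequence in `ℕ ∪ {∞}` (with `ℕ = {1,2,…}`). -/
def Y : Set Pt := {x | (∀ i, 1 ≤ x.2 i) ∧ Monotone x.2}

/-- The skew-product map `F`: `f₀(x) = (x₀ + Σ_{i≥1} 2^{−i}·(1/x_i)) mod 1` and
`f_i(x) = x_i + 1` for `i ≥ 1`, with `∞ + 1 = ∞`. -/
noncomputable def F (x : Pt) : Pt :=
  (x.1 + (((∑' i : ℕ+, (1 / 2 ^ (i : ℕ)) * einv (x.2 i)) : ℝ) : Circle1),
   fun i => x.2 i + 1)

/-- `(x, y)` is a scrambled pair of `F`: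
`liminf_{n→∞} D(Fⁿ(x), Fⁿ(y)) = 0` and `limsup_{n→∞} D(Fⁿ(x), Fⁿ(y)) > 0`. -/
def ScrambledPair (x y : Pt) : Prop :=
  liminf (fun n : ℕ => D (F^[n] x) (F^[n] y)) atTop = 0 ∧
  0 < limsup (fun n : ℕ => D (F^[n] x) (F^[n] y)) atTop

-- Auxiliary lemmas

lemma einv_nonneg (z : ℕ∞) : 0 ≤ einv z := by
  unfold einv; positivity

lemma einv_le_one (z : ℕ∞) : einv z ≤ 1 := by
  unfold einv
  rcases Nat.eq_zero_or_pos z.toNat with h | h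
  · simp [h]
  · rw [inv_le_one_iff₀]
    right; exact_mod_cast h

lemma einv_top : einv ⊤ = 0 := by simp [einv]

lemma summable_geo_pnat : Summable (fun i : ℕ+ => (1/2:ℝ)^(i:ℕ)) :=
  summable_geometric_two.comp_injective PNat.coe_injective

lemma summable_of_le_geo {f : ℕ+ → ℝ} (h0 : ∀ i, 0 ≤ f i)
    (h : ∀ i, f i ≤ (1/2:ℝ)^(i:ℕ)) : Summable f :=
  Summable.of_nonneg_of_le h0 h summable_geo_pnat

lemma coe_int_circle (m : ℤ) : ((m:ℝ) : Circle1) = 0 := by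
  have : ((m:ℝ)) ∈ AddSubgroup.zmultiples (1:ℝ) := ⟨m, by simp⟩
  exact (QuotientAddGroup.eq_zero_iff _).mpr this

lemma norm_circle_le_abs (z : ℝ) : ‖(z : Circle1)‖ ≤ |z| := by
  rw [AddCircle.norm_eq]
  simpa using round_le z 0

lemma norm_circle_le_half (u : Circle1) : ‖u‖ ≤ 1/2 := by
  induction u using QuotientAddGroup.induction_on with
  | H z => rw [AddCircle.norm_eq]; simpa using abs_sub_round z

lemma norm_circle_half : ‖((1/2 : ℝ) : Circle1)‖ = 1/2 := by
  rw [AddCircle.norm_eq]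
  norm_num [round_eq]

lemma freq_hit (g : ℕ → ℝ) (hmono : Monotone g) (htop : Tendsto g atTop atTop)
    (hstep : Tendsto (fun n => g (n+1) - g n) atTop (nhds 0))
    (r : ℝ) {ε : ℝ} (hε : 0 < ε) :
    ∃ᶠ n in atTop, ‖((g n - r : ℝ) : Circle1)‖ < ε := by
  classical
  rw [frequently_atTop]
  intro N
  obtain ⟨N₀, hN₀⟩ := eventually_atTop.mp (hstep.eventually (gt_mem_nhds hε))
  set N₁ := max N N₀ with hN₁def
  set t : ℝ := r + ⌈g N₁ - r⌉ with htdef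
  have hgN₁t : g N₁ ≤ t := by
    have := Int.le_ceil (g N₁ - r)
    rw [htdef]; linarith
  obtain ⟨B₀, hB₀⟩ := eventually_atTop.mp (htop.eventually_gt_atTop t)
  set B := max B₀ N₁ with hBdef
  have htB : t < g B := hB₀ B (le_max_left _ _)
  set P : ℕ → Prop := fun n => g n ≤ t with hPdef
  set n₀ := Nat.findGreatest P B with hn₀def
  have hN₁B : N₁ ≤ B := le_max_right _ _
  have hPn₀ : P n₀ := Nat.findGreatest_spec hN₁B hgN₁t
  have hN₁n₀ : N₁ ≤ n₀ := Nat.le_findGreatest hN₁B hgN₁t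
  have hn₀B : n₀ ≤ B := Nat.findGreatest_le B
  have hn₀neB : n₀ ≠ B := by
    intro h; rw [h] at hPn₀; exact absurd hPn₀ (not_le.mpr htB)
  have hsucc : ¬ P (n₀ + 1) :=
    Nat.findGreatest_is_greatest (Nat.lt_succ_self _) (Nat.succ_le_of_lt (lt_of_le_of_ne hn₀B hn₀neB))
  have h1 : t < g (n₀ + 1) := not_le.mp hsucc
  have h2 : g (n₀ + 1) - g n₀ < ε := hN₀ n₀ (le_trans (le_max_right _ _) hN₁n₀)
  refine ⟨n₀ + 1, ?_, ?_⟩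
  · calc N ≤ N₁ := le_max_left _ _
      _ ≤ n₀ := hN₁n₀
      _ ≤ n₀ + 1 := Nat.le_succ _
  · have key : |g (n₀ + 1) - t| < ε := by
      rw [abs_of_pos (by linarith)]
      have := hPn₀
      rw [hPdef] at this
      linarith
    have heq : ((g (n₀+1) - t : ℝ) : Circle1) = ((g (n₀+1) - r : ℝ) : Circle1) := by
      rw [htdef, show (g (n₀+1) - (r + (⌈g N₁ - r⌉:ℝ)) : ℝ) = (g (n₀+1) - r) - (⌈g N₁ - r⌉ : ℝ) from by ring,
        AddCircle.coe_sub, coe_int_circle, sub_zero]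
    rw [← heq]
    exact lt_of_le_of_lt (norm_circle_le_abs _) key

noncomputable def sfun (z : Pt) (k : ℕ) : ℝ := ∑' i : ℕ+, (1 / 2 ^ (i:ℕ) : ℝ) * einv (z.2 i + (k:ℕ∞))

lemma iterate_F (z : Pt) (n : ℕ) :
    F^[n] z = (z.1 + ((∑ k ∈ Finset.range n, sfun z k : ℝ) : Circle1),
               fun i => z.2 i + (n:ℕ∞)) := by
  induction n with
  | zero =>
      simp only [Function.iterate_zero_apply, Finset.range_zero, Finset.sum_empty,
        Nat.cast_zero, add_zero]
      ext <;> simp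
  | succ n ih =>
      rw [Function.iterate_succ_apply', ih]
      unfold F
      refine Prod.ext ?_ ?_
      · simp only [Finset.sum_range_succ, AddCircle.coe_add, ← add_assoc]
        rfl
      · funext i
        simp only []
        push_cast
        rw [add_assoc]

lemma einv_shift (z : ℕ∞) (hfin : z ≠ ⊤) (k : ℕ) :
    einv (z + (k:ℕ∞)) = ((z.toNat + k : ℕ) : ℝ)⁻¹ := by
  unfold einv
  rw [ENat.toNat_add hfin (by simp), ENat.toNat_coe]

lemma einv_top_shift (k : ℕ) : einv ((⊤:ℕ∞) + (k:ℕ∞)) = 0 := by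
  rw [top_add]; exact einv_top

noncomputable def C0 : ℝ := ∑' i : ℕ+, (1/2:ℝ)^(i:ℕ)

lemma C0_nonneg : 0 ≤ C0 := tsum_nonneg (fun i => by positivity)


/-- Claim 2: let `x ∈ Y` have all coordinates `x_i`, `i ≥ 1`, finite, let `M ∈ ℕ` (`M ≥ 1`),
and let `y ∈ Y` be given by `y₀ = (x₀ + 1 − Σ_{i≥1} 2^{−(i+M)}·δ_i) mod 1`, `y_i = x_i` for
`0 < i < M`, `y_i = ∞` for `i ≥ M`, where `δ_i = 0` if `x_{i+M} = x_M` and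
`δ_i = (Σ_{j=0}^{x_{i+M}−x_M−1} 1/(x_M+j)) mod 1` otherwise. Then `(x, y)` is a scrambled
pair with modulus `1/2` for `F`: `liminf_{n→∞} D(Fⁿ(x), Fⁿ(y)) = 0` and
`limsup_{n→∞} D(Fⁿ(x), Fⁿ(y)) ≥ 1/2`. -/
theorem claim2_scrambled_with_modulus_half
    (x : Pt) (hx : x ∈ Y) (hxfin : ∀ i : ℕ+, x.2 i ≠ ⊤) (M : ℕ+)
    (δ : ℕ+ → ℝ)
    (hδ : ∀ i : ℕ+, δ i =
      if x.2 (i + M) = x.2 M then 0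
      else Int.fract (∑ j ∈ Finset.range ((x.2 (i + M)).toNat - (x.2 M).toNat),
        (1 : ℝ) / ((x.2 M).toNat + j)))
    (y : Pt) (hy : y ∈ Y)
    (hy0 : y.1 = x.1 + (((1 - ∑' i : ℕ+, δ i / 2 ^ ((i : ℕ) + (M : ℕ))) : ℝ) : Circle1))
    (hyi : ∀ i : ℕ+, i < M → y.2 i = x.2 i)
    (hyinf : ∀ i : ℕ+, M ≤ i → y.2 i = ⊤) :
    liminf (fun n : ℕ => D (F^[n] x) (F^[n] y)) atTop = 0 ∧
    1 / 2 ≤ limsup (fun n : ℕ => D (F^[n] x) (F^[n] y)) atTop := by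
  classical
  set a : ℕ+ → ℕ := fun i => (x.2 i).toNat with ha_def
  have ha1 : ∀ i, 1 ≤ a i := by
    intro i
    have h1 : (1:ℕ∞) ≤ x.2 i := hx.1 i
    have := ENat.coe_toNat (hxfin i)
    rw [← this] at h1
    exact_mod_cast h1
  -- einv values along the orbit
  have hex : ∀ (i : ℕ+) (k : ℕ), einv (x.2 i + (k:ℕ∞)) = ((a i + k : ℕ) : ℝ)⁻¹ :=
    fun i k => einv_shift _ (hxfin i) k
  have hey_lt : ∀ (i : ℕ+), i < M → ∀ (k : ℕ), einv (y.2 i + (k:ℕ∞)) = einv (x.2 i + (k:ℕ∞)) := by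
    intro i hi k; rw [hyi i hi]
  have hey_ge : ∀ (i : ℕ+), M ≤ i → ∀ (k : ℕ), einv (y.2 i + (k:ℕ∞)) = 0 := by
    intro i hi k; rw [hyinf i hi]; exact einv_top_shift k
  -- the per-step gap terms
  set w : ℕ → ℕ+ → ℝ :=
    fun k i => (1 / 2 ^ (i:ℕ) : ℝ) * (einv (x.2 i + (k:ℕ∞)) - einv (y.2 i + (k:ℕ∞))) with hw_def
  have hw_eq : ∀ k i, w k i = if i < M then 0 else (1/2:ℝ)^(i:ℕ) * ((a i + k : ℕ) : ℝ)⁻¹ := by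
    intro k i
    by_cases hi : i < M
    · simp [hw_def, hi, hey_lt i hi k]
    · rw [if_neg hi]
      simp only [hw_def, hey_ge i (not_lt.mp hi) k, sub_zero, hex i k, one_div_pow]
  have hw_nonneg : ∀ k i, 0 ≤ w k i := by
    intro k i
    rw [hw_eq]
    split
    · exact le_refl 0
    · positivity
  have hw_le : ∀ k i, w k i ≤ (1/2:ℝ)^(i:ℕ) * ((k:ℝ)+1)⁻¹ := by
    intro k i
    rw [hw_eq]
    split
    · positivity
    · apply mul_le_mul_of_nonneg_left _ (by positivity)
      rw [show ((k:ℝ)+1) = ((1 + k : ℕ) : ℝ) from by push_cast; ring]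
      apply inv_anti₀ (by positivity)
      have := ha1 i
      push_cast
      gcongr
      exact_mod_cast this
  -- summability facts
  have hsum_es : ∀ (z : Pt) (k : ℕ), Summable (fun i : ℕ+ => (1 / 2 ^ (i:ℕ) : ℝ) * einv (z.2 i + (k:ℕ∞))) := by
    intro z k
    apply summable_of_le_geo
    · intro i; exact mul_nonneg (by positivity) (einv_nonneg _)
    · intro i
      calc (1 / 2 ^ (i:ℕ) : ℝ) * einv (z.2 i + (k:ℕ∞)) ≤ (1 / 2 ^ (i:ℕ) : ℝ) * 1 :=
            mul_le_mul_of_nonneg_left (einv_le_one _) (by positivity)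
        _ = (1/2:ℝ)^(i:ℕ) := by rw [mul_one, one_div_pow]
  have hsum_w : ∀ k, Summable (w k) := by
    intro k
    apply summable_of_le_geo (hw_nonneg k)
    intro i
    calc w k i ≤ (1/2:ℝ)^(i:ℕ) * ((k:ℝ)+1)⁻¹ := hw_le k i
      _ ≤ (1/2:ℝ)^(i:ℕ) * 1 := by
          apply mul_le_mul_of_nonneg_left _ (by positivity)
          rw [inv_le_one_iff₀]; right; linarith [Nat.cast_nonneg (α := ℝ) k]
      _ = (1/2:ℝ)^(i:ℕ) := mul_one _
  set t : ℕ → ℝ := fun k => ∑' i : ℕ+, w k i with ht_def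
  have ht_eq : ∀ k, t k = sfun x k - sfun y k := by
    intro k
    rw [ht_def]
    simp only [hw_def]
    rw [show (fun i : ℕ+ => (1 / 2 ^ (i:ℕ) : ℝ) * (einv (x.2 i + (k:ℕ∞)) - einv (y.2 i + (k:ℕ∞))))
        = (fun i : ℕ+ => (1 / 2 ^ (i:ℕ) : ℝ) * einv (x.2 i + (k:ℕ∞))
            - (1 / 2 ^ (i:ℕ) : ℝ) * einv (y.2 i + (k:ℕ∞))) from by funext i; ring]
    exact Summable.tsum_sub (hsum_es x k) (hsum_es y k)
  have ht_nonneg : ∀ k, 0 ≤ t k := fun k => tsum_nonneg (hw_nonneg k)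
  have ht_le : ∀ k, t k ≤ C0 * ((k:ℝ)+1)⁻¹ := by
    intro k
    calc t k ≤ ∑' i : ℕ+, (1/2:ℝ)^(i:ℕ) * ((k:ℝ)+1)⁻¹ :=
          Summable.tsum_le_tsum (hw_le k) (hsum_w k) (summable_geo_pnat.mul_right _)
      _ = C0 * ((k:ℝ)+1)⁻¹ := by rw [tsum_mul_right]; rfl
  have ht_low : ∀ k, (1/2:ℝ)^(M:ℕ) * ((a M + k : ℕ) : ℝ)⁻¹ ≤ t k := by
    intro k
    have := Summable.le_tsum (hsum_w k) M (fun j _ => hw_nonneg k j)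
    rwa [hw_eq, if_neg (lt_irrefl M)] at this
  set g : ℕ → ℝ := fun n => ∑ k ∈ Finset.range n, t k with hg_def
  have hg_mono : Monotone g := by
    apply monotone_nat_of_le_succ
    intro n
    rw [hg_def]
    simp only [Finset.sum_range_succ]
    exact le_add_of_nonneg_right (ht_nonneg n)
  have hg_top : Tendsto g atTop atTop := by
    have hpos : (0:ℝ) < (1/2:ℝ)^(M:ℕ) * ((a M : ℝ))⁻¹ := by
      have := ha1 M
      have : (0:ℝ) < (a M : ℝ) := by exact_mod_cast Nat.lt_of_lt_of_le Nat.zero_lt_one this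
      positivity
    have hL : Tendsto (fun n => (1/2:ℝ)^(M:ℕ) * ((a M : ℝ))⁻¹ *
        ∑ k ∈ Finset.range n, 1/((k:ℝ)+1)) atTop atTop :=
      (Real.tendsto_sum_range_one_div_nat_succ_atTop).const_mul_atTop hpos
    apply tendsto_atTop_mono _ hL
    intro n
    rw [Finset.mul_sum, hg_def]
    apply Finset.sum_le_sum
    intro k _
    refine le_trans ?_ (ht_low k)
    rw [mul_assoc]
    apply mul_le_mul_of_nonneg_left _ (by positivity)
    rw [one_div, ← mul_inv]
    apply inv_anti₀
    · have := ha1 M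
      have h0 : (0:ℝ) < (a M : ℝ) := by exact_mod_cast Nat.lt_of_lt_of_le Nat.zero_lt_one this
      positivity
    · have h1 : (1:ℝ) ≤ (a M : ℝ) := by exact_mod_cast ha1 M
      have hk : (0:ℝ) ≤ (k:ℝ) := Nat.cast_nonneg k
      push_cast
      nlinarith
  have hg_step : Tendsto (fun n => g (n+1) - g n) atTop (nhds 0) := by
    have heq : (fun n => g (n+1) - g n) = t := by
      funext n; rw [hg_def]; simp [Finset.sum_range_succ]
    rw [heq]
    apply squeeze_zero ht_nonneg ht_le
    have : Tendsto (fun k : ℕ => ((k:ℝ)+1)⁻¹) atTop (nhds 0) := by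
      simpa [one_div] using (tendsto_one_div_add_atTop_nhds_zero_nat : Tendsto (fun n : ℕ => 1 / ((n:ℝ) + 1)) atTop (nhds 0))
    simpa using this.const_mul C0
  set c : ℝ := 1 - ∑' i : ℕ+, δ i / 2 ^ ((i : ℕ) + (M : ℕ)) with hc_def
  clear_value c
  set R : ℕ → ℝ := fun n => ∑' i : ℕ+, dE (x.2 i + (n:ℕ∞)) (y.2 i + (n:ℕ∞)) / 2 ^ (i:ℕ) with hR_def
  have hD_form : ∀ n : ℕ, D (F^[n] x) (F^[n] y) = ‖((g n - c : ℝ) : Circle1)‖ + R n := by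
    intro n
    rw [iterate_F x n, iterate_F y n]
    unfold D
    simp only []
    congr 1
    have hAB : (∑ k ∈ Finset.range n, sfun x k) - (∑ k ∈ Finset.range n, sfun y k) = g n := by
      rw [hg_def, ← Finset.sum_sub_distrib]
      exact Finset.sum_congr rfl (fun k _ => (ht_eq k).symm)
    rw [hy0, dist_eq_norm]
    congr 1
    have : (x.1 + ((∑ k ∈ Finset.range n, sfun x k : ℝ) : Circle1)) -
        (x.1 + ((c : ℝ) : Circle1) + ((∑ k ∈ Finset.range n, sfun y k : ℝ) : Circle1)) =
        (((∑ k ∈ Finset.range n, sfun x k) - (∑ k ∈ Finset.range n, sfun y k) - c : ℝ) : Circle1) := by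
      rw [AddCircle.coe_sub, AddCircle.coe_sub]
      abel
    rw [this, hAB]
  -- bounds on the tail term R
  have hR_term_le : ∀ (n : ℕ) (i : ℕ+),
      dE (x.2 i + (n:ℕ∞)) (y.2 i + (n:ℕ∞)) / 2 ^ (i:ℕ) ≤ (1/2:ℝ)^(i:ℕ) * ((n:ℝ)+1)⁻¹ := by
    intro n i
    by_cases hi : i < M
    · rw [hyi i hi]
      unfold dE
      simp only [sub_self, abs_zero, zero_div]
      positivity
    · rw [hyinf i (not_lt.mp hi)]
      unfold dE
      rw [einv_top_shift n, hex i n, sub_zero, abs_of_nonneg (by positivity), div_eq_mul_one_div,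
        mul_comm, one_div_pow]
      apply mul_le_mul_of_nonneg_left _ (by positivity)
      rw [show ((n:ℝ)+1) = ((1 + n : ℕ) : ℝ) from by push_cast; ring]
      apply inv_anti₀ (by positivity)
      have := ha1 i
      push_cast
      gcongr
      exact_mod_cast this
  have hdE_nonneg : ∀ (n : ℕ) (i : ℕ+), 0 ≤ dE (x.2 i + (n:ℕ∞)) (y.2 i + (n:ℕ∞)) / 2 ^ (i:ℕ) := by
    intro n i; unfold dE; positivity
  have hR_nonneg : ∀ n : ℕ, 0 ≤ R n := by
    intro n; rw [hR_def]; exact tsum_nonneg (hdE_nonneg n)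
  have hR_sum : ∀ n : ℕ, Summable (fun i : ℕ+ => dE (x.2 i + (n:ℕ∞)) (y.2 i + (n:ℕ∞)) / 2 ^ (i:ℕ)) := by
    intro n
    apply summable_of_le_geo (hdE_nonneg n)
    intro i
    calc dE (x.2 i + (n:ℕ∞)) (y.2 i + (n:ℕ∞)) / 2 ^ (i:ℕ) ≤ (1/2:ℝ)^(i:ℕ) * ((n:ℝ)+1)⁻¹ :=
          hR_term_le n i
      _ ≤ (1/2:ℝ)^(i:ℕ) * 1 := by
          apply mul_le_mul_of_nonneg_left _ (by positivity)
          rw [inv_le_one_iff₀]; right; linarith [Nat.cast_nonneg (α := ℝ) n]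
      _ = (1/2:ℝ)^(i:ℕ) := mul_one _
  have hR_le : ∀ n : ℕ, R n ≤ C0 * ((n:ℝ)+1)⁻¹ := by
    intro n
    calc R n ≤ ∑' i : ℕ+, (1/2:ℝ)^(i:ℕ) * ((n:ℝ)+1)⁻¹ :=
          Summable.tsum_le_tsum (hR_term_le n) (hR_sum n) (summable_geo_pnat.mul_right _)
      _ = C0 * ((n:ℝ)+1)⁻¹ := by rw [tsum_mul_right]; rfl
  have hR_zero : Tendsto R atTop (nhds 0) := by
    apply squeeze_zero hR_nonneg hR_le
    have : Tendsto (fun k : ℕ => ((k:ℝ)+1)⁻¹) atTop (nhds 0) := by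
      simpa [one_div] using (tendsto_one_div_add_atTop_nhds_zero_nat : Tendsto (fun n : ℕ => 1 / ((n:ℝ) + 1)) atTop (nhds 0))
    simpa using this.const_mul C0
  -- global bounds on the distance sequence
  have hD0 : ∀ n : ℕ, 0 ≤ D (F^[n] x) (F^[n] y) := by
    intro n
    rw [hD_form n]
    have := hR_nonneg n
    have := norm_nonneg ((g n - c : ℝ) : Circle1)
    linarith
  have hDub : ∀ n : ℕ, D (F^[n] x) (F^[n] y) ≤ 1/2 + C0 := by
    intro n
    rw [hD_form n]
    have h1 : ‖((g n - c : ℝ) : Circle1)‖ ≤ 1/2 := norm_circle_le_half _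
    have h2 : R n ≤ C0 := by
      refine le_trans (hR_le n) ?_
      calc C0 * ((n:ℝ)+1)⁻¹ ≤ C0 * 1 := by
            apply mul_le_mul_of_nonneg_left _ C0_nonneg
            rw [inv_le_one_iff₀]; right; linarith [Nat.cast_nonneg (α := ℝ) n]
        _ = C0 := mul_one _
    linarith
  have hbdd_above : IsBoundedUnder (· ≤ ·) atTop (fun n : ℕ => D (F^[n] x) (F^[n] y)) :=
    ⟨1/2 + C0, Filter.eventually_map.mpr (Eventually.of_forall hDub)⟩
  have hbdd_below : IsBoundedUnder (· ≥ ·) atTop (fun n : ℕ => D (F^[n] x) (F^[n] y)) :=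
    ⟨0, Filter.eventually_map.mpr (Eventually.of_forall hD0)⟩
  constructor
  · apply le_antisymm
    · apply le_of_forall_pos_le_add
      intro ε hε
      rw [zero_add]
      apply liminf_le_of_frequently_le _ hbdd_below
      have h1 := freq_hit g hg_mono hg_top hg_step c (half_pos hε)
      have h2 : ∀ᶠ n in atTop, R n < ε/2 := hR_zero.eventually (gt_mem_nhds (half_pos hε))
      refine (h1.and_eventually h2).mono ?_
      intro n hn
      rw [hD_form n]
      linarith [hn.1, hn.2]
    · exact le_liminf_of_le hbdd_above.isCoboundedUnder_ge (Eventually.of_forall hD0)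
  · apply le_of_forall_pos_le_add
    intro ε hε
    have hfreq : ∃ᶠ n in atTop, 1/2 - ε ≤ D (F^[n] x) (F^[n] y) := by
      refine (freq_hit g hg_mono hg_top hg_step (c + 1/2) hε).mono ?_
      intro n hn
      rw [hD_form n]
      have e1 : ((g n - c : ℝ) : Circle1)
          = ((1/2 : ℝ) : Circle1) + ((g n - (c + 1/2) : ℝ) : Circle1) := by
        rw [← AddCircle.coe_add]
        congr 1
        ring
      have e2 := norm_sub_norm_le ((1/2:ℝ) : Circle1) (-((g n - (c + 1/2) : ℝ) : Circle1))
      rw [sub_neg_eq_add, ← e1, norm_neg, norm_circle_half] at e2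
      have := hR_nonneg n
      linarith [hn]
    have := le_limsup_of_frequently_le hfreq hbdd_above
    linarith
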